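/- arXiv:2010.08299 — 2 statements merged into one kernel-verified Lean document; each statement's English description precedes it below -/
import Mathlib

section
/- For real α ≥ 0, ε ≥ 0 and real β, γ > 0, the integral R(α,β,γ,β,ε) = ∫₀¹ e^{-αx} x^{β-1} (1-x)^{γ-1} · ₀F₁(;β;εx) dx equals e^{-α} B(β,γ) Σ_{k,l≥0} α^k ε^l (γ)_k / (k! l! (β+γ)_{k+l}). -/
/-!
Write `e^{-αx} = e^{-α} e^{α(1-x)}` and expand both `e^{α(1-x)}` and `₀F₁(;β;εx)` as power
series. The `(k, l)` term of the product is a constant multiple of `x^{β+l-1} (1-x)^{γ+k-1}`,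
whose integral over `(0,1)` is `B(β+l, γ+k) = B(β,γ) (β)_l (γ)_k / (β+γ)_{k+l}`. Integrating
termwise is legitimate because `B(β+l, γ+k) ≤ B(β,γ)`, so the integrals of the absolute values
are dominated by `B(β,γ)` times the product of two absolutely convergent series.
-/

open Real MeasureTheory

/-- Pochhammer (rising factorial) symbol on the reals. -/
noncomputable def poch (x : ℝ) (k : ℕ) : ℝ := (ascPochhammer ℝ k).eval x

open Set
open scoped Nat
open ProbabilityTheory (beta)

lemma poch_succ (x : ℝ) (n : ℕ) : poch x (n + 1) = poch x n * (x + n) :=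
  ascPochhammer_succ_eval n x

lemma poch_pos {x : ℝ} (hx : 0 < x) (n : ℕ) : 0 < poch x n :=
  ascPochhammer_pos n x hx

lemma min_one_le_poch {x : ℝ} (hx : 0 < x) (n : ℕ) : min 1 x ≤ poch x n := by
  induction n with
  | zero => simp [poch]
  | succ n ih =>
    rw [poch_succ]
    rcases n with _ | n
    · simp [poch]
    · calc min 1 x ≤ poch x (n + 1) := ih
        _ ≤ poch x (n + 1) * (x + ↑(n + 1)) :=
          le_mul_of_one_le_right (poch_pos hx _).le (by push_cast; linarith)

lemma Gamma_add_nat_eq_mul_poch {x : ℝ} (hx : 0 < x) (n : ℕ) :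
    Gamma (x + n) = Gamma x * poch x n := by
  induction n with
  | zero => simp [poch]
  | succ n ih =>
    rw [Nat.cast_succ, ← add_assoc, Gamma_add_one (by positivity), ih, poch_succ]
    ring

lemma exp_eq_tsum_pow_div_factorial (y : ℝ) : exp y = ∑' n : ℕ, y ^ n / n ! := by
  rw [exp_eq_exp_ℝ, NormedSpace.exp_eq_tsum_div]

lemma summable_norm_pow_div_poch_mul_factorial {β : ℝ} (hβ : 0 < β) (y : ℝ) :
    Summable fun l : ℕ => ‖y ^ l / (poch β l * l !)‖ := by
  refine .of_nonneg_of_le (fun _ => norm_nonneg _) (fun l => ?_)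
    ((summable_pow_div_factorial |y|).mul_left (min 1 β)⁻¹)
  have hpoch := poch_pos hβ l
  rw [norm_div, norm_pow, norm_eq_abs, norm_eq_abs,
    abs_of_pos (by positivity : 0 < poch β l * l !), inv_mul_eq_div, div_div, mul_comm _ (min 1 β)]
  gcongr
  exact min_one_le_poch hβ l

lemma ofReal_cpow_mul_one_sub_cpow {a b x : ℝ} (hx : x ∈ Icc 0 1) :
    (x : ℂ) ^ ((a : ℂ) - 1) * (1 - (x : ℂ)) ^ ((b : ℂ) - 1) =
      ((x ^ (a - 1) * (1 - x) ^ (b - 1) : ℝ) : ℂ) := by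
  have h1x : 0 ≤ 1 - x := sub_nonneg.2 hx.2
  rw [Complex.ofReal_mul, Complex.ofReal_cpow hx.1, Complex.ofReal_cpow h1x]
  push_cast
  rfl

lemma integrableOn_rpow_mul_one_sub_rpow {a b : ℝ} (ha : 0 < a) (hb : 0 < b) :
    IntegrableOn (fun x : ℝ => x ^ (a - 1) * (1 - x) ^ (b - 1)) (Ioo 0 1) := by
  have h := (Complex.betaIntegral_convergent (u := a) (v := b) (by simpa) (by simpa)).1
  refine IntegrableOn.congr_fun (h.mono_set Ioo_subset_Ioc_self).re (fun x hx => ?_)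
    measurableSet_Ioo
  simp [ofReal_cpow_mul_one_sub_cpow (a := a) (b := b) (Ioo_subset_Icc_self hx)]

lemma integral_rpow_mul_one_sub_rpow {a b : ℝ} (ha : 0 < a) (hb : 0 < b) :
    ∫ x in Ioo 0 1, x ^ (a - 1) * (1 - x) ^ (b - 1) = beta a b := by
  rw [ProbabilityTheory.beta_eq_betaIntegralReal a b ha hb, Complex.betaIntegral,
    intervalIntegral.integral_of_le zero_le_one, ← integral_Ioc_eq_integral_Ioo,
    setIntegral_congr_fun measurableSet_Ioc
      (fun x hx => ofReal_cpow_mul_one_sub_cpow (Ioc_subset_Icc_self hx)),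
    integral_complex_ofReal, Complex.ofReal_re]

lemma beta_add_nat_add_nat {a b : ℝ} (ha : 0 < a) (hb : 0 < b) (l k : ℕ) :
    beta (a + l) (b + k) = beta a b * (poch a l * poch b k / poch (a + b) (k + l)) := by
  have hab : a + l + (b + k) = a + b + ↑(k + l) := by push_cast; ring
  have := Gamma_pos_of_pos (add_pos ha hb)
  have := poch_pos (add_pos ha hb) (k + l)
  simp only [ProbabilityTheory.beta, hab, Gamma_add_nat_eq_mul_poch ha,
    Gamma_add_nat_eq_mul_poch hb, Gamma_add_nat_eq_mul_poch (add_pos ha hb)]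
  field_simp

lemma rpow_add_nat_mul_one_sub_rpow_add_nat {x : ℝ} (hx : x ∈ Ioo 0 1) (a b : ℝ) (l k : ℕ) :
    x ^ (a + l - 1) * (1 - x) ^ (b + k - 1) =
      x ^ (a - 1) * (1 - x) ^ (b - 1) * (x ^ l * (1 - x) ^ k) := by
  have h1x : 0 < 1 - x := sub_pos.2 hx.2
  rw [add_sub_right_comm, rpow_add_natCast hx.1.ne', add_sub_right_comm,
    rpow_add_natCast h1x.ne']
  ring

lemma beta_add_nat_add_nat_le {a b : ℝ} (ha : 0 < a) (hb : 0 < b) (l k : ℕ) :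
    beta (a + l) (b + k) ≤ beta a b := by
  rw [← integral_rpow_mul_one_sub_rpow ha hb,
    ← integral_rpow_mul_one_sub_rpow (by positivity) (by positivity)]
  refine setIntegral_mono_on (integrableOn_rpow_mul_one_sub_rpow (by positivity) (by positivity))
    (integrableOn_rpow_mul_one_sub_rpow ha hb) measurableSet_Ioo fun x hx => ?_
  have h1x : 0 < 1 - x := sub_pos.2 hx.2
  rw [rpow_add_nat_mul_one_sub_rpow_add_nat hx]
  refine mul_le_of_le_one_right (mul_nonneg (rpow_nonneg hx.1.le _) (rpow_nonneg h1x.le _)) ?_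
  exact mul_le_one₀ (pow_le_one₀ hx.1.le hx.2.le) (pow_nonneg h1x.le _)
    (pow_le_one₀ h1x.le (by linarith [hx.1]))

-- `kl.1` indexes the series of `e^{α(1-x)}`, `kl.2` that of `₀F₁(;β;εx)`.
noncomputable def rSeriesCoeff (α ε β : ℝ) (kl : ℕ × ℕ) : ℝ :=
  α ^ kl.1 / kl.1 ! * (ε ^ kl.2 / (poch β kl.2 * kl.2 !))

noncomputable def rSeriesTerm (α ε β γ : ℝ) (kl : ℕ × ℕ) (x : ℝ) : ℝ :=
  rSeriesCoeff α ε β kl * (x ^ (β + kl.2 - 1) * (1 - x) ^ (γ + kl.1 - 1))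

section RSeries

variable {α ε β γ : ℝ}

lemma summable_rSeriesCoeff (hβ : 0 < β) (α ε : ℝ) : Summable (rSeriesCoeff α ε β) :=
  summable_mul_of_summable_norm (f := fun k : ℕ => α ^ k / k !)
    (g := fun l : ℕ => ε ^ l / (poch β l * l !))
    (NormedSpace.norm_expSeries_div_summable (𝔸 := ℝ) α)
    (summable_norm_pow_div_poch_mul_factorial hβ ε)

lemma abs_rSeriesCoeff (hβ : 0 < β) (kl : ℕ × ℕ) :
    |rSeriesCoeff α ε β kl| = rSeriesCoeff |α| |ε| β kl := by
  simp [rSeriesCoeff, abs_mul, abs_div, abs_pow, abs_of_pos (poch_pos hβ kl.2)]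

lemma exp_mul_rpow_mul_tsum_eq_tsum_rSeriesTerm (hβ : 0 < β) {x : ℝ} (hx : x ∈ Ioo 0 1) :
    exp (-α * x) * x ^ (β - 1) * (1 - x) ^ (γ - 1) * ∑' l : ℕ, (ε * x) ^ l / (poch β l * l !) =
      exp (-α) * ∑' kl, rSeriesTerm α ε β γ kl x := by
  have hexp : exp (-α * x) = exp (-α) * ∑' k : ℕ, (α * (1 - x)) ^ k / k ! := by
    rw [← exp_eq_tsum_pow_div_factorial, ← exp_add]
    ring_nf
  calc _ = exp (-α) * ((∑' k : ℕ, (α * (1 - x)) ^ k / k !) *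
          (∑' l : ℕ, (ε * x) ^ l / (poch β l * l !)) * (x ^ (β - 1) * (1 - x) ^ (γ - 1))) := by
        rw [hexp]; ring
    _ = _ := by
        rw [tsum_mul_tsum_of_summable_norm (NormedSpace.norm_expSeries_div_summable (𝔸 := ℝ) _)
          (summable_norm_pow_div_poch_mul_factorial hβ _), ← tsum_mul_right]
        congr 1
        refine tsum_congr fun kl => ?_
        rw [rSeriesTerm, rSeriesCoeff, rpow_add_nat_mul_one_sub_rpow_add_nat hx, mul_pow, mul_pow]
        ring

lemma integrableOn_rSeriesTerm (hβ : 0 < β) (hγ : 0 < γ) (kl : ℕ × ℕ) :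
    IntegrableOn (rSeriesTerm α ε β γ kl) (Ioo 0 1) :=
  (integrableOn_rpow_mul_one_sub_rpow (by positivity) (by positivity)).const_mul _

lemma integral_rSeriesTerm (hβ : 0 < β) (hγ : 0 < γ) (kl : ℕ × ℕ) :
    ∫ x in Ioo 0 1, rSeriesTerm α ε β γ kl x =
      rSeriesCoeff α ε β kl * beta (β + kl.2) (γ + kl.1) := by
  rw [← integral_rpow_mul_one_sub_rpow (by positivity) (by positivity), ← integral_const_mul]
  rfl

lemma norm_rSeriesTerm (hβ : 0 < β) {x : ℝ} (hx : x ∈ Ioo 0 1) (kl : ℕ × ℕ) :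
    ‖rSeriesTerm α ε β γ kl x‖ = rSeriesTerm |α| |ε| β γ kl x := by
  have h1x : 0 < 1 - x := sub_pos.2 hx.2
  rw [rSeriesTerm, rSeriesTerm, norm_mul, norm_eq_abs, abs_rSeriesCoeff hβ,
    norm_of_nonneg (mul_nonneg (rpow_nonneg hx.1.le _) (rpow_nonneg h1x.le _))]

lemma summable_integral_norm_rSeriesTerm (hβ : 0 < β) (hγ : 0 < γ) :
    Summable fun kl => ∫ x in Ioo 0 1, ‖rSeriesTerm α ε β γ kl x‖ := by
  refine .of_nonneg_of_le (fun kl => integral_nonneg fun _ => norm_nonneg _) (fun kl => ?_)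
    ((summable_rSeriesCoeff hβ |α| |ε|).mul_right (beta β γ))
  rw [setIntegral_congr_fun measurableSet_Ioo fun x hx => norm_rSeriesTerm hβ hx kl,
    integral_rSeriesTerm hβ hγ, ← abs_rSeriesCoeff hβ]
  exact mul_le_mul_of_nonneg_left (beta_add_nat_add_nat_le hβ hγ _ _) (abs_nonneg _)

lemma rSeriesCoeff_mul_beta (hβ : 0 < β) (hγ : 0 < γ) (kl : ℕ × ℕ) :
    rSeriesCoeff α ε β kl * beta (β + kl.2) (γ + kl.1) =
      beta β γ * (α ^ kl.1 * ε ^ kl.2 * poch γ kl.1 /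
        (kl.1 ! * kl.2 ! * poch (β + γ) (kl.1 + kl.2))) := by
  have := poch_pos hβ kl.2
  have := poch_pos (add_pos hβ hγ) (kl.1 + kl.2)
  rw [rSeriesCoeff, beta_add_nat_add_nat hβ hγ]
  field_simp

end RSeries

theorem r_function_evaluation_general (α ε β γ : ℝ)
    (hβ : 0 < β) (hγ : 0 < γ) :
    ∫ x in Set.Ioo (0:ℝ) 1,
        Real.exp (-α * x) * x ^ (β - 1) * (1 - x) ^ (γ - 1) *
          (∑' l : ℕ, (ε * x) ^ l / (poch β l * l.factorial)) =
      Real.exp (-α) * (Real.Gamma β * Real.Gamma γ / Real.Gamma (β + γ)) *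
        ∑' kl : ℕ × ℕ,
          α ^ kl.1 * ε ^ kl.2 * poch γ kl.1 /
            (kl.1.factorial * kl.2.factorial * poch (β + γ) (kl.1 + kl.2)) := by
  calc _ = ∫ x in Ioo 0 1, exp (-α) * ∑' kl, rSeriesTerm α ε β γ kl x :=
        setIntegral_congr_fun measurableSet_Ioo fun x hx =>
          exp_mul_rpow_mul_tsum_eq_tsum_rSeriesTerm hβ hx
    _ = exp (-α) * ∑' kl, ∫ x in Ioo 0 1, rSeriesTerm α ε β γ kl x := by
        rw [integral_const_mul, integral_tsum_of_summable_integral_norm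
          (integrableOn_rSeriesTerm hβ hγ) (summable_integral_norm_rSeriesTerm hβ hγ)]
    _ = _ := by
        simp_rw [integral_rSeriesTerm hβ hγ, rSeriesCoeff_mul_beta hβ hγ, tsum_mul_left, mul_assoc]
        rfl

theorem r_function_evaluation (α ε β γ : ℝ) (hα : 0 ≤ α) (hε : 0 ≤ ε)
    (hβ : 0 < β) (hγ : 0 < γ) :
    ∫ x in Set.Ioo (0:ℝ) 1,
        Real.exp (-α * x) * x ^ (β - 1) * (1 - x) ^ (γ - 1) *
          (∑' l : ℕ, (ε * x) ^ l / (poch β l * l.factorial)) =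
      Real.exp (-α) * (Real.Gamma β * Real.Gamma γ / Real.Gamma (β + γ)) *
        ∑' kl : ℕ × ℕ,
          α ^ kl.1 * ε ^ kl.2 * poch γ kl.1 /
            (kl.1.factorial * kl.2.factorial * poch (β + γ) (kl.1 + kl.2)) :=
  r_function_evaluation_general α ε β γ hβ hγ
end

section
/- For every positive integer n, n − 2(Γ((n+1)/2)/Γ(n/2))² ∈ (0, 1/2]; in particular the limit as σ → ∞ of the MMSE, namely n − 2(Γ((n+1)/2)/Γ(n/2))², is positive and bounded by 1/2. -/
/-!
With `r x = Γ(x + 1/2) / Γ(x)`, log-convexity of `Γ` at the midpoints of `[x, x + 1]` and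
`[x - 1/2, x + 1/2]` gives the crude bounds `x - 1/2 ≤ r x ^ 2 ≤ x`. The recursion
`r (x + 1) = (x + 1/2) / x * r x` sharpens them: `r x ^ 2 / x` strictly increases under `x ↦ x + 1`
and is bounded by `1`, while `r x ^ 2 / (x - 1/4)` strictly decreases under `x ↦ x + 1` and tends
to `1` by the crude bounds. Hence `x - 1/4 < r x ^ 2 < x`; take `x = n / 2`.
-/

open Real Filter Topology

theorem Real.Gamma_midpoint_sq_le_mul {s t : ℝ} (hs : 0 < s) (ht : 0 < t) :
    Gamma ((s + t) / 2) ^ 2 ≤ Gamma s * Gamma t := by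
  have h := Gamma_mul_add_mul_le_rpow_Gamma_mul_rpow_Gamma hs ht
    one_half_pos one_half_pos (add_halves 1)
  rw [← mul_rpow (Gamma_pos_of_pos hs).le (Gamma_pos_of_pos ht).le, ← sqrt_eq_rpow,
    le_sqrt' (Gamma_pos_of_pos (by positivity))] at h
  convert h using 3
  ring

noncomputable def gammaHalfRatio (x : ℝ) : ℝ := Gamma (x + 1 / 2) / Gamma x

section gammaHalfRatio

variable {x : ℝ}

theorem gammaHalfRatio_pos (hx : 0 < x) : 0 < gammaHalfRatio x :=
  div_pos (Gamma_pos_of_pos (by positivity)) (Gamma_pos_of_pos hx)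

theorem gammaHalfRatio_add_one (hx : 0 < x) :
    gammaHalfRatio (x + 1) = (x + 1 / 2) / x * gammaHalfRatio x := by
  have hΓ := (Gamma_pos_of_pos hx).ne'
  rw [gammaHalfRatio, gammaHalfRatio, add_right_comm, Gamma_add_one (by positivity),
    Gamma_add_one hx.ne']
  field_simp

theorem gammaHalfRatio_sq_le (hx : 0 < x) : gammaHalfRatio x ^ 2 ≤ x := by
  have h := Gamma_midpoint_sq_le_mul hx (by positivity : 0 < x + 1)
  rw [Gamma_add_one hx.ne', show (x + (x + 1)) / 2 = x + 1 / 2 by ring] at h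
  rw [gammaHalfRatio, div_pow, div_le_iff₀ (by positivity [Gamma_pos_of_pos hx])]
  linarith

theorem sub_half_le_gammaHalfRatio_sq (hx : 0 < x) : x - 1 / 2 ≤ gammaHalfRatio x ^ 2 := by
  rcases le_or_gt x (1 / 2) with hx' | hx'
  · nlinarith [sq_nonneg (gammaHalfRatio x)]
  have hx₀ : 0 < x - 1 / 2 := by linarith
  have h := Gamma_midpoint_sq_le_mul hx₀ (by positivity : 0 < x + 1 / 2)
  have hshift : Gamma (x + 1 / 2) = (x - 1 / 2) * Gamma (x - 1 / 2) := by
    rw [← Gamma_add_one hx₀.ne']; ring_nf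
  rw [show (x - 1 / 2 + (x + 1 / 2)) / 2 = x by ring] at h
  rw [gammaHalfRatio, div_pow, le_div_iff₀ (by positivity [Gamma_pos_of_pos hx])]
  calc (x - 1 / 2) * Gamma x ^ 2
      ≤ (x - 1 / 2) * (Gamma (x - 1 / 2) * Gamma (x + 1 / 2)) := by gcongr
    _ = Gamma (x + 1 / 2) ^ 2 := by rw [hshift]; ring

theorem gammaHalfRatio_sq_lt (hx : 0 < x) : gammaHalfRatio x ^ 2 < x := by
  have h := gammaHalfRatio_sq_le (by positivity : 0 < x + 1)
  rw [gammaHalfRatio_add_one hx, mul_pow, div_pow, div_mul_eq_mul_div,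
    div_le_iff₀ (by positivity)] at h
  nlinarith [gammaHalfRatio_pos hx]

theorem gammaHalfRatio_add_one_sq_div_lt (hx : 1 / 4 < x) :
    gammaHalfRatio (x + 1) ^ 2 / (x + 1 - 1 / 4) < gammaHalfRatio x ^ 2 / (x - 1 / 4) := by
  have hx₀ : 0 < x := by linarith
  have key : (x + 1 / 2) ^ 2 / x ^ 2 * (x - 1 / 4) < x + 1 - 1 / 4 := by
    rw [div_mul_eq_mul_div, div_lt_iff₀ (by positivity)]
    nlinarith
  rw [gammaHalfRatio_add_one hx₀, mul_pow, div_pow, div_lt_div_iff₀ (by linarith) (by linarith)]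
  nlinarith [pow_pos (gammaHalfRatio_pos hx₀) 2]

theorem sub_quarter_lt_gammaHalfRatio_sq (hx : 1 / 4 < x) :
    x - 1 / 4 < gammaHalfRatio x ^ 2 := by
  set w : ℕ → ℝ := fun k => gammaHalfRatio (x + k) ^ 2 / (x + k - 1 / 4)
  have hw : StrictAnti w := strictAnti_nat_of_succ_lt fun k => by
    simpa only [w, Nat.cast_succ, ← add_assoc] using
      gammaHalfRatio_add_one_sq_div_lt (by linarith [k.cast_nonneg (α := ℝ)] : 1 / 4 < x + k)
  have hlim : Tendsto (fun k : ℕ => 1 - 1 / 4 / (x + k - 1 / 4)) atTop (𝓝 1) := by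
    simpa [sub_eq_add_neg] using tendsto_const_nhds.sub (tendsto_const_nhds.div_atTop
      (tendsto_atTop_add_const_right _ _
        (tendsto_atTop_add_const_left _ x tendsto_natCast_atTop_atTop)))
  have hw1 : 1 ≤ w 1 := le_of_tendsto hlim <| eventually_atTop.2 ⟨1, fun k hk => by
    have hpos : (0 : ℝ) < x + k - 1 / 4 := by linarith [k.cast_nonneg (α := ℝ)]
    refine le_trans ?_ (hw.antitone hk)
    show _ ≤ gammaHalfRatio (x + k) ^ 2 / (x + k - 1 / 4)
    rw [le_div_iff₀ hpos, sub_mul, div_mul_cancel₀ _ hpos.ne']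
    linarith [sub_half_le_gammaHalfRatio_sq (by linarith : 0 < x + k)]⟩
  have h0 : 1 < w 0 := hw1.trans_lt (hw one_pos)
  simp only [w, Nat.cast_zero, add_zero] at h0
  rwa [one_lt_div (by linarith)] at h0

end gammaHalfRatio

theorem chi_variance_bounds (n : ℕ) (hn : 0 < n) :
    0 < (n : ℝ) - 2 * (Real.Gamma (((n : ℝ) + 1) / 2) / Real.Gamma ((n : ℝ) / 2)) ^ 2 ∧
      (n : ℝ) - 2 * (Real.Gamma (((n : ℝ) + 1) / 2) / Real.Gamma ((n : ℝ) / 2)) ^ 2 ≤ 1 / 2 := by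
  have hx : 1 / 4 < (n : ℝ) / 2 := by
    have : (1 : ℝ) ≤ n := by exact_mod_cast hn
    linarith
  have hr : Gamma (((n : ℝ) + 1) / 2) / Gamma ((n : ℝ) / 2) = gammaHalfRatio ((n : ℝ) / 2) := by
    rw [gammaHalfRatio, add_div]
  rw [hr]
  have hupper := gammaHalfRatio_sq_lt (by linarith : 0 < (n : ℝ) / 2)
  have hlower := sub_quarter_lt_gammaHalfRatio_sq hx
  constructor <;> linarith
end
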